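/- Every point (x₁,x₂,x₃,y₁,y₂) satisfying the fundamental-domain inequalities v^{3/2} < v^{3/2}x₂² + w, 1 < w⁻² + x₁², 0 < x₁ < 1/2, 0 < x₂ < 1/2, -1/2 < x₃ < 1/2 (where w = y₁⁻¹, v^{-3/2} = y₂²y₁) has y₁ > √3/2. -/
import Mathlib

open Real

theorem stmt_13 (x₁ x₂ x₃ y₁ y₂ v w : ℝ)
    (hy₁ : 0 < y₁) (hy₂ : 0 < y₂) (hv : 0 < v)
    (hw : w = 1 / y₁) (hvdef : v ^ (-(3/2) : ℝ) = y₂ ^ 2 * y₁)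
    (h1 : v ^ ((3:ℝ)/2) < v ^ ((3:ℝ)/2) * x₂ ^ 2 + w)
    (h2 : 1 < w⁻¹ ^ 2 + x₁ ^ 2)
    (hx₁ : 0 < x₁) (hx₁' : x₁ < 1 / 2)
    (hx₂ : 0 < x₂) (hx₂' : x₂ < 1 / 2)
    (hx₃ : -(1 / 2) < x₃) (hx₃' : x₃ < 1 / 2) :
    y₁ > Real.sqrt 3 / 2 := by
  have hwi : w⁻¹ = y₁ := by rw [hw]; field_simp
  rw [hwi] at h2
  have h3 : (Real.sqrt 3) ^ 2 = 3 := Real.sq_sqrt (by norm_num)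
  have h4 : Real.sqrt 3 ≥ 0 := Real.sqrt_nonneg 3
  nlinarith [sq_nonneg (y₁ - Real.sqrt 3 / 2)]
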